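/- arXiv:1909.00019 — 6 statements merged into one kernel-verified Lean document; each statement's English description precedes it below -/
import Mathlib

section
/- Let G be a word-representable simple graph with connected components G_1 = (V_1, E_1), ..., G_k = (V_k, E_k). Then the minimal length ℓ(G) of a word that word-represents G satisfies ℓ(G) ≤ Σ_{i=1}^{k} (ℓ(G_i) + |V_i|) − max_{1 ≤ j ≤ k} |V_j|. -/
variable {V : Type*}

/-- The restriction of a word `w` to the letters `x` and `y`. -/
def restrictWord [DecidableEq V] (w : List V) (x y : V) : List V :=
  w.filter fun z => decide (z = x ∨ z = y)

/-- `x` and `y` alternate in `w`: the restriction of `w` to `{x, y}` has no two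
consecutive equal letters. -/
def Alternates [DecidableEq V] (w : List V) (x y : V) : Prop :=
  (restrictWord w x y).Chain' (· ≠ ·)

/-- `w` word-represents the simple graph `G`: every vertex occurs in `w`, and two distinct
vertices are adjacent iff they alternate in `w`. -/
def Represents [DecidableEq V] (G : SimpleGraph V) (w : List V) : Prop :=
  (∀ v : V, v ∈ w) ∧ ∀ x y : V, x ≠ y → (G.Adj x y ↔ Alternates w x y)

/-- `ℓ(G)`: the minimal length of a word-representant of `G`. -/
noncomputable def minRepLength [DecidableEq V] (G : SimpleGraph V) : ℕ :=
  sInf {n | ∃ w : List V, Represents G w ∧ w.length = n}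

/-!
Take a shortest representant of every component and fix a component `c₀` of maximal size. Every
other component's representant is followed by one copy of each of its vertices, in the order of
their last occurrences. Concatenating these blocks represents `G`: inside a block the alternations
are unchanged, while a vertex of such a block occurs twice in it and a vertex outside it does not
occur there at all, so the two do not alternate. The concatenation has length
`Σᵢ (ℓ(Gᵢ) + |Vᵢ|) - |V(c₀)|`.
-/

namespace List

variable {α : Type*} [DecidableEq α]

theorem dedup_filter (p : α → Bool) (l : List α) : (l.filter p).dedup = l.dedup.filter p := by
  induction l with
  | nil => rfl
  | cons a l ih =>
    by_cases ha : a ∈ l <;> by_cases hp : p a <;>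
      simp [ha, hp, ih, dedup_cons_of_mem, dedup_cons_of_notMem, mem_filter]

theorem getLast?_dedup (l : List α) : l.dedup.getLast? = l.getLast? := by
  rcases l.eq_nil_or_concat with rfl | ⟨l', a, rfl⟩
  · rfl
  obtain ⟨s, hs⟩ := suffix_union_right l' [a]
  rw [concat_eq_append, dedup_append, (nodup_singleton a).dedup, ← hs]
  simp

theorem isChain_ne_append_dedup_iff {l : List α} (hl : 2 ≤ l.dedup.length) :
    IsChain (· ≠ ·) (l ++ l.dedup) ↔ IsChain (· ≠ ·) l := by
  obtain ⟨p, q, t, ht⟩ : ∃ p q t, l.dedup = p :: q :: t := by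
    match h : l.dedup, hl with
    | p :: q :: t, _ => exact ⟨p, q, t, rfl⟩
  have hnd : (p :: q :: t).Nodup := ht ▸ nodup_dedup l
  -- `dedup` keeps last occurrences, so `l` ends with the last letter of `l.dedup`, not with `p`.
  rw [isChain_append, ← getLast?_dedup, ht]
  refine ⟨fun h => h.1, fun h => ⟨h, hnd.isChain, ?_⟩⟩
  intro a ha b hb
  simp only [getLast?_cons_cons, head?_cons, Option.mem_def, Option.some.injEq] at ha hb
  rintro rfl
  exact (nodup_cons.1 hnd).1 (hb ▸ mem_of_getLast? ha)

end List

section Words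

variable {α β ι : Type*} [DecidableEq α] {w u : List α} {x y : α}

theorem restrictWord_append (w₁ w₂ : List α) (x y : α) :
    restrictWord (w₁ ++ w₂) x y = restrictWord w₁ x y ++ restrictWord w₂ x y :=
  List.filter_append _ _

theorem alternates_iff : Alternates w x y ↔ (restrictWord w x y).IsChain (· ≠ ·) := Iff.rfl

theorem restrictWord_eq_nil (h : ∀ z ∈ w, z ≠ x ∧ z ≠ y) : restrictWord w x y = [] :=
  List.filter_eq_nil_iff.mpr fun z hz => by simpa using h z hz

theorem alternates_comm : Alternates w x y ↔ Alternates w y x := by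
  simp only [Alternates, restrictWord, or_comm]

theorem Alternates.of_infix (h : Alternates w x y) (hu : u <:+: w) : Alternates u x y :=
  List.IsChain.infix h (hu.filter _)

theorem alternates_map_iff [DecidableEq β] {f : α → β} (hf : f.Injective) :
    Alternates (w.map f) (f x) (f y) ↔ Alternates w x y := by
  simp only [alternates_iff, restrictWord, List.filter_map, Function.comp_def, hf.eq_iff,
    List.isChain_map, hf.ne_iff]

theorem alternates_filter_iff (p : α → Bool) (hx : p x) (hy : p y) :
    Alternates (w.filter p) x y ↔ Alternates w x y := by
  unfold Alternates restrictWord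
  rw [List.filter_filter, List.filter_congr]
  intro z _
  by_cases hz : z = x ∨ z = y
  · rcases hz with rfl | rfl <;> simp [hx, hy]
  · simp [hz]

theorem not_alternates_of_two_le_count (hy : y ∉ w) (hx : 2 ≤ w.count x) :
    ¬Alternates w x y := by
  have hrestrict : restrictWord w x y = List.replicate (w.count x) x := by
    rw [← List.filter_eq, restrictWord]
    refine List.filter_congr fun z hz => ?_
    simp only [decide_eq_decide, or_iff_left_iff_imp]
    rintro rfl
    exact absurd hz hy
  obtain ⟨n, hn⟩ := Nat.exists_eq_add_of_le' hx
  simp [alternates_iff, hrestrict, hn, List.replicate_succ]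

theorem alternates_append_dedup_iff (hx : x ∈ w) (hy : y ∈ w) (hxy : x ≠ y) :
    Alternates (w ++ w.dedup) x y ↔ Alternates w x y := by
  have htwo : (restrictWord w x y).dedup.length = 2 := by
    rw [← List.card_toFinset, ← Finset.card_pair hxy]
    congr 1
    ext z
    simp only [restrictWord, List.mem_toFinset, List.mem_filter, Finset.mem_insert,
      Finset.mem_singleton, decide_eq_true_eq]
    constructor
    · exact fun h => h.2
    · rintro (rfl | rfl) <;> simp [*]
  have hdedup : restrictWord w.dedup x y = (restrictWord w x y).dedup :=
    (List.dedup_filter _ _).symm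
  rw [alternates_iff, alternates_iff, restrictWord_append, hdedup]
  exact List.isChain_ne_append_dedup_iff htwo.ge

theorem alternates_flatten_iff {f : α → ι} {b : ι → List α} {M : List ι} {i : ι}
    (hM : M.Nodup) (hi : i ∈ M) (hb : ∀ j, ∀ z ∈ b j, f z = j) (hx : f x = i)
    (hy : f y = i) : Alternates (M.map b).flatten x y ↔ Alternates (b i) x y := by
  obtain ⟨s, t, rfl⟩ := List.append_of_mem hi
  have hst : i ∉ s ++ t := (List.nodup_cons.1 (List.nodup_middle.1 hM)).1
  have hnil : ∀ r : List ι, i ∉ r → restrictWord (r.map b).flatten x y = [] := by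
    intro r hr
    refine restrictWord_eq_nil fun z hz => ?_
    obtain ⟨j, hj, hzj⟩ : ∃ j ∈ r, z ∈ b j := by simpa using hz
    have hfz : f z ≠ i := (hb j z hzj).symm ▸ fun e => hr (e ▸ hj)
    exact ⟨fun e => hfz (e ▸ hx), fun e => hfz (e ▸ hy)⟩
  simp only [alternates_iff, List.map_append, List.map_cons, List.flatten_append,
    List.flatten_cons, restrictWord_append, hnil s fun h => hst (List.mem_append_left t h),
    hnil t fun h => hst (List.mem_append_right s h), List.nil_append, List.append_nil]

theorem Alternates.of_mem_flatten {L : List (List α)} (h : Alternates L.flatten x y)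
    (hu : u ∈ L) : Alternates u x y :=
  h.of_infix (List.infix_of_mem_flatten hu)

end Words

section Representations

variable [DecidableEq V] {G : SimpleGraph V} {w : List V}

theorem minRepLength_le_length (h : Represents G w) : minRepLength G ≤ w.length :=
  Nat.sInf_le ⟨w, h, rfl⟩

theorem exists_represents_length_eq_minRepLength (h : ∃ w, Represents G w) :
    ∃ w, Represents G w ∧ w.length = minRepLength G :=
  let ⟨w, hw⟩ := h
  Nat.sInf_mem (s := {n | ∃ w, Represents G w ∧ w.length = n}) ⟨w.length, w, hw, rfl⟩

theorem Represents.finite (h : Represents G w) : Finite V :=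
  Set.finite_univ_iff.mp (w.finite_toSet.subset fun v _ => h.1 v)

theorem Represents.induce (h : Represents G w) (S : Set V) :
    ∃ w' : List S, Represents (G.induce S) w' := by
  classical
  refine ⟨(w.filter (· ∈ S)).attachWith (· ∈ S)
    fun _ hv => of_decide_eq_true (List.mem_filter.1 hv).2, ?_, ?_⟩
  · exact fun v => by simpa using h.1 v
  · intro x y hxy
    rw [← alternates_map_iff Subtype.val_injective, List.attachWith_map_subtype_val,
      alternates_filter_iff _ (by simp) (by simp), ← h.2 _ _ (Subtype.val_injective.ne hxy)]
    simp

theorem Represents.mem_map_val_iff {S : Set V} {w : List S} (h : Represents (G.induce S) w)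
    {v : V} : v ∈ w.map Subtype.val ↔ v ∈ S :=
  ⟨fun hv => by obtain ⟨⟨v, hvS⟩, -, rfl⟩ := List.mem_map.1 hv; exact hvS,
    fun hv => List.mem_map_of_mem (h.1 ⟨v, hv⟩)⟩

theorem Represents.alternates_map_val_iff {S : Set V} {w : List S}
    (h : Represents (G.induce S) w) {x y : V} (hx : x ∈ S) (hy : y ∈ S) (hxy : x ≠ y) :
    Alternates (w.map Subtype.val) x y ↔ G.Adj x y := by
  rw [show x = (⟨x, hx⟩ : S).val from rfl, show y = (⟨y, hy⟩ : S).val from rfl,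
    alternates_map_iff Subtype.val_injective, ← h.2 _ _ (by simpa using hxy)]
  simp

end Representations

namespace SimpleGraph

variable [DecidableEq V] {G : SimpleGraph V}

section ComponentsWord

variable [DecidableEq G.ConnectedComponent] (w : ∀ c : G.ConnectedComponent, List c.supp)
  (c₀ : G.ConnectedComponent)

def componentBlock (c : G.ConnectedComponent) : List V :=
  if c = c₀ then (w c).map Subtype.val
  else (w c).map Subtype.val ++ ((w c).map Subtype.val).dedup

noncomputable def componentsWord [Fintype G.ConnectedComponent] : List V :=
  (Finset.univ.toList.map (componentBlock w c₀)).flatten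

variable {w c₀}

theorem connectedComponentMk_of_mem_componentBlock {c : G.ConnectedComponent} {v : V}
    (hv : v ∈ componentBlock w c₀ c) : G.connectedComponentMk v = c := by
  have hv' : v ∈ (w c).map Subtype.val := by
    unfold componentBlock at hv
    split_ifs at hv
    · exact hv
    · simpa using hv
  obtain ⟨⟨v, hvc⟩, -, rfl⟩ := List.mem_map.1 hv'
  exact hvc

theorem mem_componentBlock (hw : ∀ c, Represents (G.induce c.supp) (w c)) (v : V) :
    v ∈ componentBlock w c₀ (G.connectedComponentMk v) := by
  have hv : v ∈ (w (G.connectedComponentMk v)).map Subtype.val := (hw _).mem_map_val_iff.2 rfl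
  unfold componentBlock
  split_ifs
  · exact hv
  · exact List.mem_append_left _ hv

theorem alternates_componentBlock_iff (hw : ∀ c, Represents (G.induce c.supp) (w c)) {x y : V}
    (hxy : x ≠ y) (hyx : G.connectedComponentMk y = G.connectedComponentMk x) :
    Alternates (componentBlock w c₀ (G.connectedComponentMk x)) x y ↔ G.Adj x y := by
  have hx : x ∈ (G.connectedComponentMk x).supp := rfl
  have hy : y ∈ (G.connectedComponentMk x).supp := hyx
  unfold componentBlock
  split_ifs
  · exact (hw _).alternates_map_val_iff hx hy hxy
  · rw [alternates_append_dedup_iff ((hw _).mem_map_val_iff.2 hx) ((hw _).mem_map_val_iff.2 hy)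
      hxy]
    exact (hw _).alternates_map_val_iff hx hy hxy

theorem not_alternates_componentBlock (hw : ∀ c, Represents (G.induce c.supp) (w c))
    {c : G.ConnectedComponent} {x y : V} (hc : c ≠ c₀) (hx : G.connectedComponentMk x = c)
    (hy : G.connectedComponentMk y ≠ c) : ¬Alternates (componentBlock w c₀ c) x y := by
  have hxw : x ∈ (w c).map Subtype.val := (hw c).mem_map_val_iff.2 hx
  unfold componentBlock
  rw [if_neg hc]
  refine not_alternates_of_two_le_count (fun hyw => hy ?_) ?_
  · rw [List.mem_append, List.mem_dedup, or_self] at hyw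
    exact (hw c).mem_map_val_iff.1 hyw
  · rw [List.count_append]
    have h₁ := List.count_pos_iff.2 hxw
    have h₂ := List.count_pos_iff.2 (List.mem_dedup.2 hxw)
    omega

theorem length_componentBlock_add (hw : ∀ c, Represents (G.induce c.supp) (w c))
    (c : G.ConnectedComponent) :
    (componentBlock w c₀ c).length + (if c = c₀ then Nat.card c.supp else 0) =
      (w c).length + Nat.card c.supp := by
  have hcard : Nat.card c.supp = ((w c).map Subtype.val).dedup.length := by
    have hsupp : c.supp = ↑((w c).map Subtype.val).toFinset := by
      ext v
      rw [Finset.mem_coe, List.mem_toFinset, (hw c).mem_map_val_iff]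
    rw [Nat.card_coe_set_eq, congrArg Set.ncard hsupp, Set.ncard_coe_finset, List.card_toFinset]
  unfold componentBlock
  split_ifs
  · simp
  · simp [hcard]

theorem represents_componentsWord [Fintype G.ConnectedComponent]
    (hw : ∀ c, Represents (G.induce c.supp) (w c)) : Represents G (componentsWord w c₀) := by
  refine ⟨fun v => List.mem_flatten.2 ⟨_, List.mem_map_of_mem (Finset.mem_toList.2
    (Finset.mem_univ _)), mem_componentBlock hw v⟩, fun x y hxy => ?_⟩
  by_cases hyx : G.connectedComponentMk y = G.connectedComponentMk x
  · rw [componentsWord, alternates_flatten_iff (Finset.nodup_toList _)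
      (Finset.mem_toList.2 (Finset.mem_univ _))
      (fun _ _ => connectedComponentMk_of_mem_componentBlock) rfl hyx,
      alternates_componentBlock_iff hw hxy hyx]
  · have hnadj : ¬G.Adj x y := fun h => hyx (ConnectedComponent.eq.2 h.reachable).symm
    refine iff_of_false hnadj fun h => ?_
    have hblock (c : G.ConnectedComponent) : Alternates (componentBlock w c₀ c) x y :=
      h.of_mem_flatten (List.mem_map_of_mem (Finset.mem_toList.2 (Finset.mem_univ c)))
    by_cases hx₀ : G.connectedComponentMk x = c₀
    · refine not_alternates_componentBlock hw (hx₀ ▸ hyx) rfl (Ne.symm hyx) ?_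
      exact alternates_comm.1 (hblock _)
    · exact not_alternates_componentBlock hw hx₀ rfl hyx (hblock _)

theorem length_componentsWord_add [Fintype G.ConnectedComponent]
    (hw : ∀ c, Represents (G.induce c.supp) (w c)) :
    (componentsWord w c₀).length + Nat.card c₀.supp =
      ∑ c, ((w c).length + Nat.card c.supp) := by
  have hsum := Finset.sum_congr rfl fun c (_ : c ∈ Finset.univ) =>
    length_componentBlock_add (c₀ := c₀) hw c
  rw [Finset.sum_add_distrib, Finset.sum_ite_eq'] at hsum
  simpa [componentsWord, List.length_flatten, Finset.sum_map_toList] using hsum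

end ComponentsWord

theorem minRepLength_add_card_supp_le [Fintype G.ConnectedComponent] (hG : ∃ w, Represents G w)
    (c₀ : G.ConnectedComponent) :
    minRepLength G + Nat.card c₀.supp ≤
      ∑ c : G.ConnectedComponent, (minRepLength (G.induce c.supp) + Nat.card c.supp) := by
  classical
  obtain ⟨w₀, hw₀⟩ := hG
  choose w hw hlen using fun c : G.ConnectedComponent =>
    exists_represents_length_eq_minRepLength (hw₀.induce c.supp)
  calc minRepLength G + Nat.card c₀.supp
      ≤ (componentsWord w c₀).length + Nat.card c₀.supp :=
        Nat.add_le_add_right (minRepLength_le_length (represents_componentsWord hw)) _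
    _ = ∑ c : G.ConnectedComponent, (minRepLength (G.induce c.supp) + Nat.card c.supp) := by
        simp only [length_componentsWord_add hw, hlen]

end SimpleGraph

theorem min_length_le_sum_over_components_general [DecidableEq V]
    (G : SimpleGraph V) (hG : ∃ w : List V, Represents G w) :
    minRepLength G ≤
      (∑ᶠ c : G.ConnectedComponent, (minRepLength (G.induce c.supp) + Nat.card c.supp)) -
        ⨆ c : G.ConnectedComponent, Nat.card c.supp := by
  obtain ⟨w₀, hw₀⟩ := hG
  have := hw₀.finite
  have : Fintype G.ConnectedComponent := Fintype.ofFinite _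
  rw [finsum_eq_sum_of_fintype]
  cases isEmpty_or_nonempty V with
  | inl hV =>
    have hnil : w₀ = [] := List.eq_nil_iff_forall_not_mem.2 fun v => isEmptyElim v
    simpa [hnil] using minRepLength_le_length hw₀
  | inr hV =>
    obtain ⟨c₀, hc₀⟩ := Finite.exists_max fun c : G.ConnectedComponent => Nat.card c.supp
    have hsup : ⨆ c : G.ConnectedComponent, Nat.card c.supp = Nat.card c₀.supp :=
      le_antisymm (ciSup_le hc₀)
        (le_ciSup (f := fun c : G.ConnectedComponent => Nat.card c.supp)
          (Set.finite_range _).bddAbove c₀)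
    have := SimpleGraph.minRepLength_add_card_supp_le ⟨w₀, hw₀⟩ c₀
    omega

/-- If `G` is a word-representable graph with connected components
`G₁, …, G_k`, then `ℓ(G) ≤ Σᵢ (ℓ(Gᵢ) + |Vᵢ|) − maxⱼ |Vⱼ|`. -/
theorem min_length_le_sum_over_components [Fintype V] [DecidableEq V]
    (G : SimpleGraph V) (hG : ∃ w : List V, Represents G w) :
    minRepLength G ≤
      (∑ᶠ c : G.ConnectedComponent, (minRepLength (G.induce c.supp) + Nat.card c.supp)) -
        ⨆ c : G.ConnectedComponent, Nat.card c.supp :=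
  min_length_le_sum_over_components_general G hG
end

section
/- Let w be a word that word-represents a triangle-free simple graph G = (V, E). Then at most two elements of V occur exactly once in w. -/
variable {V : Type*}

lemma adj_of_single [DecidableEq V] {G : SimpleGraph V} {w : List V}
    (hw : Represents G w) {x y : V} (hx : w.count x = 1) (hy : w.count y = 1)
    (hxy : x ≠ y) : G.Adj x y := by
  rw [hw.2 x y hxy]
  unfold Alternates
  have hnd : (restrictWord w x y).Nodup := by
    rw [List.nodup_iff_count_le_one]
    intro z
    by_cases hzx : z = x
    · subst hzx
      rw [restrictWord, List.count_filter (by simp)]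
      omega
    by_cases hzy : z = y
    · subst hzy
      rw [restrictWord, List.count_filter (by simp)]
      omega
    · rw [List.count_eq_zero_of_not_mem]
      · omega
      · simp [restrictWord, List.mem_filter, hzx, hzy]
  exact List.Pairwise.isChain hnd

/-- If `w` word-represents a triangle-free graph `G = (V, E)`, then at most
two elements of `V` occur exactly once in `w`. -/
theorem at_most_two_single_occurrences [DecidableEq V] (G : SimpleGraph V)
    (hfree : G.CliqueFree 3) (w : List V) (hw : Represents G w) :
    {v : V | w.count v = 1}.ncard ≤ 2 := by
  by_contra h
  push_neg at h
  have hfin : {v : V | w.count v = 1}.Finite := by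
    apply Set.Finite.subset w.toFinset.finite_toSet
    intro v hv
    simp only [Set.mem_setOf_eq] at hv
    simp [List.mem_toFinset, ← List.count_pos_iff, hv]
  obtain ⟨a, ha, b, hb, c, hc, hab, hac, hbc⟩ := (Set.two_lt_ncard hfin).mp h
  exact hfree {a, b, c} (SimpleGraph.is3Clique_triple_iff.mpr
    ⟨adj_of_single hw ha hb hab, adj_of_single hw ha hc hac, adj_of_single hw hb hc hbc⟩)
end

section
/- Let G be a triangle-free simple graph on n vertices. Then every word that word-represents G has length at least 2n − 2. -/
variable {V : Type*}

/-!
Two letters that each occur exactly once in a representing word alternate, so the letters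
occurring once span a clique. In a triangle-free graph there are at most two of them, and every
other letter occurs at least twice, giving `2n - 2` letters in total.
-/

open Finset

theorem SimpleGraph.IsClique.card_lt_of_cliqueFree {α : Type*} {G : SimpleGraph α}
    {s : Finset α} {n : ℕ} (hs : G.IsClique (s : Set α)) (hG : G.CliqueFree n) : #s < n := by
  by_contra! h
  obtain ⟨t, hts, rfl⟩ := exists_subset_card_eq h
  exact hG t ⟨hs.subset (by simpa using hts), rfl⟩

theorem List.two_mul_card_le_length_add_card_count_eq_one {α : Type*} [Fintype α]
    [DecidableEq α] {w : List α} (hw : ∀ a, a ∈ w) :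
    2 * Fintype.card α ≤ w.length + #{a | w.count a = 1} := by
  calc 2 * Fintype.card α = ∑ _a : α, (2 : ℕ) := by simp [mul_comm]
    _ ≤ ∑ a, (w.count a + if w.count a = 1 then 1 else 0) := by
      refine Finset.sum_le_sum fun a _ => ?_
      have := List.count_pos_iff.2 (hw a)
      split_ifs <;> omega
    _ = w.length + #{a | w.count a = 1} := by
      rw [Finset.sum_add_distrib, Finset.card_filter, ← Multiset.coe_card,
        ← Multiset.sum_count_eq_card fun a _ => Finset.mem_univ a]
      simp

section

variable [DecidableEq V]

theorem length_restrictWord (w : List V) {x y : V} (h : x ≠ y) :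
    (restrictWord w x y).length = w.count x + w.count y := by
  induction w with
  | nil => rfl
  | cons a t ih =>
    simp only [restrictWord, List.filter_cons] at *
    by_cases hx : a = x <;> by_cases hy : a = y <;> simp_all <;> omega

theorem count_restrictWord_left (w : List V) (x y : V) :
    (restrictWord w x y).count x = w.count x := by
  simp [restrictWord, List.count_filter]

theorem alternates_of_count_eq_one {w : List V} {x y : V} (hx : w.count x = 1)
    (hy : w.count y = 1) (hxy : x ≠ y) : Alternates w x y := by
  obtain ⟨a, b, hab⟩ : ∃ a b, restrictWord w x y = [a, b] :=
    List.length_eq_two.mp (by rw [length_restrictWord w hxy, hx, hy])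
  have hcount := count_restrictWord_left w x y
  rw [Alternates, hab, List.Chain', List.isChain_pair]
  rintro rfl
  rw [hab, hx] at hcount
  by_cases hax : a = x <;> simp [hax] at hcount

theorem Represents.isClique_count_eq_one [Fintype V] {G : SimpleGraph V} {w : List V}
    (hw : Represents G w) : G.IsClique (↑({v | w.count v = 1} : Finset V) : Set V) := by
  intro x hx y hy hxy
  simp only [coe_filter, mem_univ, true_and, Set.mem_ofPred_eq] at hx hy
  exact (hw.2 x y hxy).2 (alternates_of_count_eq_one hx hy hxy)

end

/-- Every word that word-represents a triangle-free graph on `n` vertices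
has length at least `2n − 2`. -/
theorem triangle_free_length_lower_bound [Fintype V] [DecidableEq V]
    (G : SimpleGraph V) (n : ℕ) (hn : Fintype.card V = n) (hfree : G.CliqueFree 3)
    (w : List V) (hw : Represents G w) :
    2 * n - 2 ≤ w.length := by
  have hsingletons := hw.isClique_count_eq_one.card_lt_of_cliqueFree hfree
  have hcount := List.two_mul_card_le_length_add_card_count_eq_one hw.1
  omega
end

section
/- Let T be a tree on n ≥ 2 vertices and let w be a word-representant of T of minimal length 2n − 2. Let x and y be the two vertices of T that occur exactly once in w, with x occurring before y in w; then xy is an edge of T, and w is a concatenation w = u v where every letter of u is a vertex of T_{x,xy} and every letter of v is a vertex of T_{y,xy}, where T_{x,xy} (respectively T_{y,xy}) is the connected component containing x (respectively y) of the graph obtained from T by deleting the edge xy. -/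
/-!
All letters other than `x` and `y` occur exactly twice: a third letter occurring once would
alternate with `x` and `y` and close a triangle, and the length `2n - 2` leaves no room for more.
Let `F v ≤ L v` be the positions of the occurrences of `v`. A letter `u` occurring twice is
adjacent to `v` iff exactly one occurrence of `v` lies strictly between those of `u`; so neighbours
have overlapping spans, and a span straddling the position of `x` (or `y`) is that of a neighbour
of `x` (or `y`). Deleting the bridge `xy` leaves two sides joined by no other edge. Along a walk
from `x` no span can pass the position of `y`, so every letter on the side of `x` ends before `y`.
If a letter `b` on the side of `y` started before a letter `a` on the side of `x` ended, then on a
walk from `b` to `y` some `c` would straddle the end of `a`, and, not crossing `a`, contain its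
span. On a walk from `a` to `x` spans cannot leave that of `c` without crossing `c`, so `x` would
lie inside it, making `c` a neighbour of `x`. So the side of `x` ends before the side of `y` starts.
-/

variable {V : Type*}

open List

namespace List

variable [DecidableEq V] {w : List V} {x : V}

theorem exists_eq_append_cons_of_count_eq_one (h : w.count x = 1) :
    ∃ s t, w = s ++ x :: t ∧ x ∉ s ∧ x ∉ t := by
  obtain ⟨s, t, rfl⟩ := append_of_mem (count_pos_iff.mp (by omega : 0 < w.count x))
  simp only [count_append, count_cons_self] at h
  exact ⟨s, t, rfl, count_eq_zero.mp (by omega), count_eq_zero.mp (by omega)⟩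

theorem exists_eq_append_cons_append_cons_of_count_eq_two (h : w.count x = 2) :
    ∃ s u r, w = s ++ x :: u ++ x :: r ∧ x ∉ s ∧ x ∉ u ∧ x ∉ r := by
  obtain ⟨s, t, rfl⟩ := append_of_mem (count_pos_iff.mp (by omega : 0 < w.count x))
  simp only [count_append, count_cons_self] at h
  by_cases hs : x ∈ s
  · have hs1 : s.count x = 1 := by have := count_pos_iff.mpr hs; omega
    obtain ⟨s₁, s₂, rfl, h₁, h₂⟩ := exists_eq_append_cons_of_count_eq_one hs1
    refine ⟨s₁, s₂, t, by simp, h₁, h₂, count_eq_zero.mp ?_⟩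
    simp only [count_append, count_cons_self] at h
    omega
  · have ht1 : t.count x = 1 := by have := count_eq_zero.mpr hs; omega
    obtain ⟨u, r, rfl, hu, hr⟩ := exists_eq_append_cons_of_count_eq_one ht1
    exact ⟨s, u, r, by simp, hs, hu, hr⟩

theorem exists_occurrences_of_count_le_two (h1 : 1 ≤ w.count x) (h2 : w.count x ≤ 2) :
    ∃ f l : ℕ, f ≤ l ∧ ∀ k, w[k]? = some x ↔ k = f ∨ k = l := by
  refine ⟨w.idxOfNth x 0, w.idxOfNth x (w.count x - 1), idxOfNth_mono (Nat.zero_le _),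
    fun k => ⟨fun hk => ?_, ?_⟩⟩
  · obtain ⟨hk, hkx⟩ := List.getElem?_eq_some_iff.mp hk
    have hb : w[k] == x := beq_iff_eq.mpr hkx
    have := countBefore_lt_count_of_lt_length_of_beq hb
    rw [← idxOfNth_countBefore_of_lt_length_of_beq hb]
    rcases Nat.lt_or_ge (w.countBefore x k) 1 with h | h
    · exact .inl (by congr 1; omega)
    · exact .inr (by congr 1; omega)
  · have hocc : ∀ n < w.count x, w[w.idxOfNth x n]? = some x := fun n hn =>
      List.getElem?_eq_some_iff.mpr ⟨idxOfNth_lt_length_of_lt_count hn, getElem_idxOfNth_eq⟩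
    rintro (rfl | rfl)
    exacts [hocc 0 (by omega), hocc _ (by omega)]

theorem count_take_of_occurrences {f l : ℕ} (hfl : f ≤ l)
    (hx : ∀ k, w[k]? = some x ↔ k = f ∨ k = l) (i : ℕ) :
    (w.take i).count x = (if f < i then 1 else 0) + (if f < l ∧ l < i then 1 else 0) := by
  induction i with
  | zero => simp
  | succ i ih =>
    have hi : w[i]?.toList.count x = if i = f ∨ i = l then 1 else 0 := by
      simp only [← hx i]
      cases w[i]? <;> simp [count_singleton]
    rw [take_add_one, count_append, ih, hi]
    split_ifs <;> omega

theorem count_eq_of_occurrences {f l : ℕ} (hfl : f ≤ l)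
    (hx : ∀ k, w[k]? = some x ↔ k = f ∨ k = l) :
    w.count x = if f = l then 1 else 2 := by
  have h := count_take_of_occurrences hfl hx w.length
  have : l < w.length := (List.getElem?_eq_some_iff.mp ((hx l).mpr (.inr rfl))).1
  rw [take_length] at h
  rw [h]
  split_ifs <;> omega

theorem sum_count_eq_length [Fintype V] (w : List V) : ∑ v, w.count v = w.length := by
  simpa using Multiset.sum_count_eq_card (s := Finset.univ) (m := (w : Multiset V)) (by simp)

theorem count_eq_two_of_length_eq [Fintype V] {y : V} (hxy : x ≠ y)
    (hlen : w.length = 2 * Fintype.card V - 2) (hx : w.count x = 1) (hy : w.count y = 1)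
    (h2 : ∀ v, v ≠ x → v ≠ y → 2 ≤ w.count v) {v : V} (hvx : v ≠ x) (hvy : v ≠ y) :
    w.count v = 2 := by
  set S : Finset V := {x, y}ᶜ
  have hsplit : ∑ v ∈ S, w.count v + ∑ v ∈ {x, y}, w.count v = ∑ v, w.count v :=
    Finset.sum_compl_add_sum _ _
  rw [Finset.sum_pair hxy, sum_count_eq_length, hx, hy] at hsplit
  have hcard : S.card + 2 = Fintype.card V := by
    rw [Finset.card_compl, ← Finset.card_pair hxy]
    exact Nat.sub_add_cancel (Finset.card_le_univ _)
  have hle : ∀ v ∈ S, 2 ≤ w.count v := fun v hv => by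
    simp only [S, Finset.mem_compl, Finset.mem_insert, Finset.mem_singleton, not_or] at hv
    exact h2 v hv.1 hv.2
  have hsum : ∑ v ∈ S, 2 = ∑ v ∈ S, w.count v := by
    rw [Finset.sum_const, smul_eq_mul]
    omega
  exact ((Finset.sum_eq_sum_iff_of_le hle).mp hsum v (by simp [S, hvx, hvy])).symm

omit [DecidableEq V] in
theorem isChain_ne_replicate_append_iff {y : V} (hxy : x ≠ y) (a : ℕ) (l : List V) :
    IsChain (· ≠ ·) (replicate a y ++ x :: l) ↔ a ≤ 1 ∧ IsChain (· ≠ ·) (x :: l) := by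
  rcases a with _ | _ | a <;> simp [replicate_succ, isChain_cons_cons, hxy.symm]

omit [DecidableEq V] in
theorem isChain_ne_cons_replicate_append_iff {y : V} (hxy : x ≠ y) (b : ℕ) (l : List V) :
    IsChain (· ≠ ·) (x :: (replicate b y ++ x :: l)) ↔
      b = 1 ∧ IsChain (· ≠ ·) (x :: l) := by
  rcases b with _ | _ | b <;> simp [replicate_succ, isChain_cons_cons, hxy, hxy.symm]

omit [DecidableEq V] in
theorem isChain_ne_cons_replicate_iff {y : V} (hxy : x ≠ y) (c : ℕ) :
    IsChain (· ≠ ·) (x :: replicate c y) ↔ c ≤ 1 := by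
  rcases c with _ | _ | c <;> simp [replicate_succ, isChain_cons_cons, hxy]

theorem exists_eq_append_of_pairwise {α : Type*} {p : α → Prop} {l : List α}
    (h : l.Pairwise fun a b => p b → p a) :
    ∃ u v, l = u ++ v ∧ (∀ a ∈ u, p a) ∧ ∀ b ∈ v, ¬p b := by
  induction l with
  | nil => exact ⟨[], [], rfl, by simp, by simp⟩
  | cons a l ih =>
    rw [pairwise_cons] at h
    by_cases ha : p a
    · obtain ⟨u, v, rfl, hu, hv⟩ := ih h.2
      exact ⟨a :: u, v, rfl, by simpa [ha] using hu, hv⟩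
    · exact ⟨[], a :: l, rfl, by simp, by simpa [ha] using fun b hb hpb => ha (h.1 b hb hpb)⟩

end List

section Alternation

variable [DecidableEq V] {w s u r : List V} {x y : V}

theorem alternates_iff_isChain :
    Alternates w x y ↔ IsChain (· ≠ ·) (restrictWord w x y) := Iff.rfl

theorem restrictWord_of_notMem (h : x ∉ w) : restrictWord w x y = replicate (w.count y) y := by
  rw [restrictWord, ← filter_eq]
  exact filter_congr fun a ha => by grind

theorem alternates_of_count_le_one (hx : w.count x ≤ 1) (hy : w.count y ≤ 1) :
    Alternates w x y := by
  refine alternates_iff_isChain.mpr (nodup_iff_count_le_one.mpr fun a => ?_).isChain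
  by_cases ha : a = x ∨ a = y
  · exact (filter_sublist.count_le a).trans (by rcases ha with rfl | rfl <;> assumption)
  · have : a ∉ restrictWord w x y := by simp [restrictWord, ha]
    simp [count_eq_zero_of_not_mem this]

theorem alternates_append_cons_append_cons_iff (hxy : x ≠ y) (hs : x ∉ s) (hu : x ∉ u)
    (hr : x ∉ r) :
    Alternates (s ++ x :: u ++ x :: r) x y ↔
      s.count y ≤ 1 ∧ u.count y = 1 ∧ r.count y ≤ 1 := by
  have hfilter : restrictWord (s ++ x :: u ++ x :: r) x y = replicate (s.count y) y ++
      x :: (replicate (u.count y) y ++ x :: replicate (r.count y) y) := by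
    simp only [← restrictWord_of_notMem hs, ← restrictWord_of_notMem hu,
      ← restrictWord_of_notMem hr]
    simp [restrictWord]
  rw [alternates_iff_isChain, hfilter, isChain_ne_replicate_append_iff hxy,
    isChain_ne_cons_replicate_append_iff hxy, isChain_ne_cons_replicate_iff hxy]

theorem alternates_iff_of_occurrences (hxy : x ≠ y) {fx lx fy ly : ℕ} (hflx : fx < lx)
    (hx : ∀ k, w[k]? = some x ↔ k = fx ∨ k = lx) (hfly : fy ≤ ly)
    (hy : ∀ k, w[k]? = some y ↔ k = fy ∨ k = ly) :
    Alternates w x y ↔ Xor (fx < fy ∧ fy < lx) (fy < ly ∧ fx < ly ∧ ly < lx) := by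
  have hne : ∀ k, k = fy ∨ k = ly → ¬(k = fx ∨ k = lx) := fun k hky hkx =>
    hxy (Option.some_inj.mp (((hx k).mpr hkx).symm.trans ((hy k).mpr hky)))
  have hfy := hne fy (.inl rfl)
  have hly := hne ly (.inr rfl)
  obtain ⟨s, u, r, rfl, hs, hu, hr⟩ := exists_eq_append_cons_append_cons_of_count_eq_two
    ((count_eq_of_occurrences hflx.le hx).trans (if_neg hflx.ne))
  have h1 := (hx s.length).mp (by simp)
  have h2 := (hx (s.length + u.length + 1)).mp (by grind)
  obtain ⟨rfl, rfl⟩ : fx = s.length ∧ lx = s.length + u.length + 1 := by omega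
  have cs := count_take_of_occurrences hfly hy s.length
  have csu := count_take_of_occurrences hfly hy (s.length + u.length + 1)
  have call := count_eq_of_occurrences hfly hy
  rw [show (s ++ x :: u ++ x :: r).take s.length = s by simp] at cs
  rw [take_left' (by simp; omega)] at csu
  simp only [count_append, count_cons_of_ne hxy] at csu call
  rw [alternates_append_cons_append_cons_iff hxy hs hu hr, xor_iff_iff_not]
  split_ifs at cs csu call <;> omega

theorem lt_of_restrictWord_eq_pair (hxy : x ≠ y) (h : restrictWord w x y = [x, y]) {i j : ℕ}
    (hi : w[i]? = some y) (hj : w[j]? = some x) : j < i := by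
  by_contra! hij
  have hij : i < j :=
    lt_of_le_of_ne hij fun h => hxy (Option.some_inj.mp ((h ▸ hj).symm.trans hi))
  have hy : y ∈ w.take j := mem_iff_getElem?.mpr ⟨i, by rwa [getElem?_take_of_lt hij]⟩
  have hx : x ∈ w.drop j := mem_iff_getElem?.mpr ⟨0, by rwa [getElem?_drop, Nat.add_zero]⟩
  have hsub : [y, x] <+ w :=
    take_append_drop j w ▸ (singleton_sublist.mpr hy).append (singleton_sublist.mpr hx)
  have : restrictWord [y, x] x y <+ restrictWord w x y := hsub.filter _
  rw [h] at this
  simp only [restrictWord, filter, true_or, or_true] at this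
  exact hxy (by simpa using this.eq_of_length rfl : y = x ∧ x = y).2

end Alternation

namespace SimpleGraph

variable {G : SimpleGraph V} {u v x y : V}

theorem Reachable.exists_adj_mem_notMem {S : Set V} (h : G.Reachable u v) (hu : u ∈ S)
    (hv : v ∉ S) : ∃ a b, G.Reachable u a ∧ G.Adj a b ∧ a ∈ S ∧ b ∉ S := by
  classical
  obtain ⟨p⟩ := h
  obtain ⟨d, hd, ha, hb⟩ := p.exists_boundary_dart S hu hv
  exact ⟨d.fst, d.snd, ⟨p.takeUntil _ (p.dart_fst_mem_support_of_mem_darts hd)⟩, d.adj,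
    ha, hb⟩

theorem IsAcyclic.cliqueFree_three (hG : G.IsAcyclic) : G.CliqueFree 3 := by
  classical
  intro s hs
  obtain ⟨a, b, c, hab, hac, hbc, -⟩ := is3Clique_iff.mp hs
  have hbridge := isAcyclic_iff_forall_adj_isBridge.mp hG hab
  rw [isBridge_iff, reachable_deleteEdges_iff_exists_walk] at hbridge
  exact hbridge ⟨.cons hac (.cons hbc.symm .nil), by simp [hab.ne, hbc.ne, hac.ne]⟩

theorem Reachable.deleteEdges_of_adj {e : Sym2 V} {w : V} (h : (G.deleteEdges {e}).Reachable u v)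
    (hadj : G.Adj v w) (he : s(v, w) ≠ e) : (G.deleteEdges {e}).Reachable u w :=
  h.trans (deleteEdges_adj.mpr ⟨hadj, he⟩).reachable

theorem Connected.reachable_or_reachable_deleteEdges (hG : G.Connected) (x y z : V) :
    (G.deleteEdges {s(x, y)}).Reachable x z ∨ (G.deleteEdges {s(x, y)}).Reachable y z := by
  by_contra hz
  obtain ⟨a, b, -, hab, ha, hb⟩ := (hG.preconnected x z).exists_adj_mem_notMem
    (S := {v | (G.deleteEdges {s(x, y)}).Reachable x v ∨ (G.deleteEdges {s(x, y)}).Reachable y v})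
    (Or.inl .rfl) hz
  by_cases he : s(a, b) = s(x, y)
  · rcases Sym2.eq_iff.mp he with ⟨-, rfl⟩ | ⟨-, rfl⟩
    exacts [hb (Or.inr .rfl), hb (Or.inl .rfl)]
  · exact hb (ha.imp (·.deleteEdges_of_adj hab he) (·.deleteEdges_of_adj hab he))

end SimpleGraph

open SimpleGraph

structure IntervalModel [DecidableEq V] (T : SimpleGraph V) (w : List V) (F L : V → ℕ) :
    Prop where
  first_le_last : ∀ v, F v ≤ L v
  getElem?_eq_some_iff : ∀ v k, w[k]? = some v ↔ k = F v ∨ k = L v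
  adj_iff : ∀ u v, u ≠ v → F u < L u →
    (T.Adj u v ↔ Xor (F u < F v ∧ F v < L u) (F v < L v ∧ F u < L v ∧ L v < L u))

theorem Represents.exists_intervalModel [DecidableEq V] {T : SimpleGraph V} {w : List V}
    (hw : Represents T w) (h2 : ∀ v, w.count v ≤ 2) : ∃ F L, IntervalModel T w F L := by
  choose F L hFL hocc using fun v =>
    exists_occurrences_of_count_le_two (count_pos_iff.mpr (hw.1 v)) (h2 v)
  refine ⟨F, L, hFL, hocc, fun u v huv hu => ?_⟩
  rw [hw.2 u v huv]
  exact alternates_iff_of_occurrences huv hu (hocc u) (hFL v) (hocc v)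

namespace IntervalModel

variable [DecidableEq V] {T : SimpleGraph V} {w : List V} {F L : V → ℕ} {u v : V}

theorem first_eq_last_iff_count_eq_one (h : IntervalModel T w F L) (v : V) :
    F v = L v ↔ w.count v = 1 := by
  rw [count_eq_of_occurrences (h.first_le_last v) (h.getElem?_eq_some_iff v)]
  split_ifs <;> simp [*]

theorem positions_ne (h : IntervalModel T w F L) (huv : u ≠ v) :
    F u ≠ F v ∧ F u ≠ L v ∧ L u ≠ F v ∧ L u ≠ L v := by
  have key : ∀ i j, (i = F u ∨ i = L u) → (j = F v ∨ j = L v) → i ≠ j :=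
    fun i j hi hj hij => huv (Option.some_inj.mp (((h.getElem?_eq_some_iff u i).mpr hi).symm.trans
      (hij ▸ (h.getElem?_eq_some_iff v j).mpr hj)))
  exact ⟨key _ _ (.inl rfl) (.inl rfl), key _ _ (.inl rfl) (.inr rfl),
    key _ _ (.inr rfl) (.inl rfl), key _ _ (.inr rfl) (.inr rfl)⟩

theorem first_le_and_le_last_of_getElem? (h : IntervalModel T w F L) {k : ℕ}
    (hk : w[k]? = some v) :
    F v ≤ k ∧ k ≤ L v := by
  have := h.first_le_last v
  rcases (h.getElem?_eq_some_iff v k).mp hk with rfl | rfl <;> omega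

theorem adj_iff_of_first_eq_last (h : IntervalModel T w F L) (huv : u ≠ v) (hu : F u < L u)
    (hv : F v = L v) : T.Adj u v ↔ F u < F v ∧ F v < L u := by
  rw [h.adj_iff u v huv hu, hv]
  simp [Xor]

theorem adj_iff_of_first_lt_last (h : IntervalModel T w F L) (huv : u ≠ v) (hu : F u < L u)
    (hv : F v < L v) : T.Adj u v ↔
      (F u < F v ∧ F v < L u ∧ L u < L v) ∨ (F v < F u ∧ F u < L v ∧ L v < L u) := by
  rw [h.adj_iff u v huv hu, Xor]
  have := h.positions_ne huv
  omega

theorem first_lt_last_of_adj (h : IntervalModel T w F L) (hadj : T.Adj u v)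
    (huv : F u < L u ∨ F v < L v) : F u < L v := by
  have := h.first_le_last u
  have := h.first_le_last v
  rcases huv with hu | hv
  · have := (h.adj_iff u v hadj.ne hu).mp hadj
    unfold Xor at this
    omega
  · have := (h.adj_iff v u hadj.ne.symm hv).mp hadj.symm
    unfold Xor at this
    omega

end IntervalModel

structure BridgeModel [DecidableEq V] (T : SimpleGraph V) (w : List V) (F L : V → ℕ) (x y : V) :
    Prop extends IntervalModel T w F L where
  first_eq_last_iff : ∀ v, F v = L v ↔ v = x ∨ v = y
  first_lt_first : F x < F y
  not_reachable : ¬(T.deleteEdges {s(x, y)}).Reachable x y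

namespace BridgeModel

variable [DecidableEq V] {T : SimpleGraph V} {w : List V} {F L : V → ℕ} {x y a b c : V}

theorem first_eq_last_left (h : BridgeModel T w F L x y) : F x = L x :=
  (h.first_eq_last_iff x).mpr (.inl rfl)

theorem first_eq_last_right (h : BridgeModel T w F L x y) : F y = L y :=
  (h.first_eq_last_iff y).mpr (.inr rfl)

theorem ne_of_reachable (h : BridgeModel T w F L x y)
    (ha : (T.deleteEdges {s(x, y)}).Reachable x a) (hb : (T.deleteEdges {s(x, y)}).Reachable y b) :
    a ≠ b := by
  rintro rfl
  exact h.not_reachable (ha.trans hb.symm)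

theorem eq_of_adj (h : BridgeModel T w F L x y)
    (ha : (T.deleteEdges {s(x, y)}).Reachable x a) (hb : (T.deleteEdges {s(x, y)}).Reachable y b)
    (hab : T.Adj a b) : a = x ∧ b = y := by
  by_cases he : s(a, b) = s(x, y)
  · rcases Sym2.eq_iff.mp he with hxy | ⟨rfl, rfl⟩
    · exact hxy
    · exact absurd ha h.not_reachable
  · exact absurd (ha.deleteEdges_of_adj hab he) (h.ne_of_reachable · hb rfl)

theorem first_lt_last_of_adj (h : BridgeModel T w F L x y)
    (hab : (T.deleteEdges {s(x, y)}).Adj a b) : F a < L b := by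
  refine h.toIntervalModel.first_lt_last_of_adj (deleteEdges_adj.mp hab).1 ?_
  by_contra! hs
  have ha := (h.first_eq_last_iff a).mp (le_antisymm (h.first_le_last a) hs.1)
  have hb := (h.first_eq_last_iff b).mp (le_antisymm (h.first_le_last b) hs.2)
  have hne := (deleteEdges_adj.mp hab).2
  rcases ha with rfl | rfl <;> rcases hb with rfl | rfl
  all_goals first | exact hab.ne rfl | exact hne (by simp [Sym2.eq_swap])

theorem last_lt_first_right (h : BridgeModel T w F L x y)
    (ha : (T.deleteEdges {s(x, y)}).Reachable x a) : L a < F y := by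
  by_contra hya
  obtain ⟨c, e, hc, hce, hcS, heS⟩ := ha.exists_adj_mem_notMem (S := {v | L v < F y})
    (by simpa [← h.first_eq_last_left] using h.first_lt_first) hya
  simp only [Set.mem_ofPred_eq, not_lt] at hcS heS
  have he := hc.trans hce.reachable
  have hey : e ≠ y := h.ne_of_reachable he .rfl
  have := h.first_lt_last_of_adj hce.symm
  have := h.positions_ne hey
  have := h.first_le_last c
  have hadj : T.Adj e y := (h.adj_iff_of_first_eq_last hey (by omega) h.first_eq_last_right).mpr
    (by omega)
  obtain ⟨rfl, -⟩ := h.eq_of_adj he .rfl hadj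
  have := h.first_eq_last_left
  omega

theorem exists_nest (h : BridgeModel T w F L x y)
    (ha : (T.deleteEdges {s(x, y)}).Reachable x a) (hb : (T.deleteEdges {s(x, y)}).Reachable y b)
    (hba : F b < L a) :
    ∃ c, (T.deleteEdges {s(x, y)}).Reachable y c ∧ F c < F a ∧ L a < L c := by
  have hay := h.last_lt_first_right ha
  obtain ⟨c, e, hc, hce, hcS, heS⟩ := hb.symm.exists_adj_mem_notMem (S := {v | F v < L a}) hba
    (by simp; omega)
  simp only [Set.mem_ofPred_eq, not_lt] at hcS heS
  have hc := hb.trans hc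
  have := h.first_lt_last_of_adj hce.symm
  have := h.positions_ne (h.ne_of_reachable ha (hc.trans hce.reachable))
  have hcd : F c < L c := by omega
  refine ⟨c, hc, ?_, by omega⟩
  rcases (h.first_le_last a).lt_or_eq with had | has
  · have hnadj : ¬T.Adj a c := fun hadj => by
      have := h.first_eq_last_right
      obtain ⟨-, rfl⟩ := h.eq_of_adj ha hc hadj
      omega
    rw [h.adj_iff_of_first_lt_last (h.ne_of_reachable ha hc) had hcd] at hnadj
    have := h.positions_ne (h.ne_of_reachable ha hc)
    omega
  · omega

theorem not_nested (h : BridgeModel T w F L x y)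
    (ha : (T.deleteEdges {s(x, y)}).Reachable x a) (hc : (T.deleteEdges {s(x, y)}).Reachable y c) :
    ¬(F c < F a ∧ L a < L c) := by
  intro hnest
  have hcd : F c < L c := by have := h.first_le_last a; omega
  have hnadj : ∀ e, (T.deleteEdges {s(x, y)}).Reachable x e → ¬T.Adj c e := fun e he hadj => by
    have := h.first_eq_last_right
    obtain ⟨-, rfl⟩ := h.eq_of_adj he hc hadj.symm
    omega
  have hx : ¬(F c < F x ∧ L x < L c) := fun hx => hnadj x .rfl
    ((h.adj_iff_of_first_eq_last (h.ne_of_reachable .rfl hc).symm hcd h.first_eq_last_left).mpr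
      (by have := h.first_eq_last_left; omega))
  obtain ⟨d, e, hd, hde, hdS, heS⟩ := ha.symm.exists_adj_mem_notMem
    (S := {v | F c < F v ∧ L v < L c}) hnest hx
  simp only [Set.mem_ofPred_eq] at hdS heS
  have hd := ha.trans hd
  have he := hd.trans hde.reachable
  have hdd : F d < L d := by
    rcases (h.first_le_last d).lt_or_eq with hdd | hds
    · exact hdd
    · rcases (h.first_eq_last_iff d).mp hds with rfl | rfl
      · exact absurd hdS hx
      · exact absurd hd h.not_reachable
  have hce := h.ne_of_reachable he hc
  have := h.positions_ne hce
  have := h.positions_ne (deleteEdges_adj.mp hde).1.ne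
  rcases (h.first_le_last e).lt_or_eq with hed | hes
  · have hde' := (h.adj_iff_of_first_lt_last (deleteEdges_adj.mp hde).1.ne hdd hed).mp
      (deleteEdges_adj.mp hde).1
    refine hnadj e he ((h.adj_iff_of_first_lt_last hce.symm hcd hed).mpr ?_)
    omega
  · have := (h.adj_iff_of_first_eq_last (deleteEdges_adj.mp hde).1.ne hdd hes).mp
      (deleteEdges_adj.mp hde).1
    omega

theorem last_lt_first (h : BridgeModel T w F L x y)
    (ha : (T.deleteEdges {s(x, y)}).Reachable x a) (hb : (T.deleteEdges {s(x, y)}).Reachable y b) :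
    L a < F b := by
  by_contra hba
  have := h.positions_ne (h.ne_of_reachable ha hb)
  obtain ⟨c, hc, hnest⟩ := h.exists_nest ha hb (by omega)
  exact h.not_nested ha hc hnest

theorem pairwise (h : BridgeModel T w F L x y) :
    w.Pairwise fun a b =>
      (T.deleteEdges {s(x, y)}).Reachable y a → ¬(T.deleteEdges {s(x, y)}).Reachable x b := by
  refine pairwise_iff_getElem.mpr fun i j hi hj hij ha hb => ?_
  have := h.first_le_and_le_last_of_getElem? (getElem?_eq_getElem hi)
  have := h.first_le_and_le_last_of_getElem? (getElem?_eq_getElem hj)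
  have := h.last_lt_first hb ha
  omega

end BridgeModel

theorem Represents.adj_of_count_le_one [DecidableEq V] {T : SimpleGraph V} {w : List V}
    {u v : V} (hw : Represents T w) (huv : u ≠ v) (hu : w.count u ≤ 1) (hv : w.count v ≤ 1) :
    T.Adj u v :=
  (hw.2 u v huv).mpr (alternates_of_count_le_one hu hv)

theorem Represents.count_ne_one_of_isAcyclic [DecidableEq V] {T : SimpleGraph V} {w : List V}
    {x y v : V} (hw : Represents T w) (hT : T.IsAcyclic) (hxy : x ≠ y) (hx : w.count x = 1)
    (hy : w.count y = 1) (hvx : v ≠ x) (hvy : v ≠ y) : w.count v ≠ 1 := fun hv =>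
  hT.cliqueFree_three {x, y, v} (is3Clique_triple_iff.mpr ⟨hw.adj_of_count_le_one hxy hx.le hy.le,
    hw.adj_of_count_le_one hvx.symm hx.le hv.le, hw.adj_of_count_le_one hvy.symm hy.le hv.le⟩)

theorem Represents.exists_bridgeModel [DecidableEq V] {T : SimpleGraph V} {w : List V} {x y : V}
    (hw : Represents T w) (hT : T.IsAcyclic) (hxy : x ≠ y) (hx : w.count x = 1)
    (hy : w.count y = 1) (horder : restrictWord w x y = [x, y])
    (hcount : ∀ v, v ≠ x → v ≠ y → w.count v = 2) : ∃ F L, BridgeModel T w F L x y := by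
  obtain ⟨F, L, hM⟩ := hw.exists_intervalModel fun v => by
    rcases eq_or_ne v x with rfl | hvx; · omega
    rcases eq_or_ne v y with rfl | hvy; · omega
    exact (hcount v hvx hvy).le
  refine ⟨F, L, { hM with
    first_eq_last_iff := fun v => ?_
    first_lt_first := lt_of_restrictWord_eq_pair hxy horder
      ((hM.getElem?_eq_some_iff y _).mpr (.inl rfl)) ((hM.getElem?_eq_some_iff x _).mpr (.inl rfl))
    not_reachable :=
      isAcyclic_iff_forall_adj_isBridge.mp hT (hw.adj_of_count_le_one hxy hx.le hy.le) }⟩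
  rw [hM.first_eq_last_iff_count_eq_one]
  refine ⟨fun hv => ?_, by rintro (rfl | rfl) <;> assumption⟩
  by_contra! hvxy
  exact absurd (hcount v hvxy.1 hvxy.2) (by omega)

theorem minimal_rep_subtree_order_general [Fintype V] [DecidableEq V]
    (T : SimpleGraph V) (hT : T.IsTree) (n : ℕ) (hn : Fintype.card V = n)
    (w : List V) (hw : Represents T w) (hlen : w.length = 2 * n - 2)
    (x y : V) (hxy : x ≠ y) (hx : w.count x = 1) (hy : w.count y = 1)
    (horder : restrictWord w x y = [x, y]) :
    T.Adj x y ∧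
    ∃ u v : List V, w = u ++ v ∧
      (∀ z ∈ u, (T.deleteEdges {s(x, y)}).Reachable x z) ∧
      (∀ z ∈ v, (T.deleteEdges {s(x, y)}).Reachable y z) := by
  have hcount : ∀ v, v ≠ x → v ≠ y → w.count v = 2 :=
    fun v => count_eq_two_of_length_eq hxy (hn ▸ hlen) hx hy fun v hvx hvy => by
      have := count_pos_iff.mpr (hw.1 v)
      have := hw.count_ne_one_of_isAcyclic hT.isAcyclic hxy hx hy hvx hvy
      omega
  obtain ⟨F, L, hB⟩ := hw.exists_bridgeModel hT.isAcyclic hxy hx hy horder hcount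
  have hside := hT.connected.reachable_or_reachable_deleteEdges x y
  obtain ⟨u, v, huv, hu, hv⟩ := List.exists_eq_append_of_pairwise
    (hB.pairwise.imp fun hab hb => by_contra fun ha => hab ((hside _).resolve_left ha) hb)
  exact ⟨hw.adj_of_count_le_one hxy hx.le hy.le, u, v, huv, hu,
    fun z hz => (hside z).resolve_left (hv z hz)⟩

/-- Let `T` be a tree on `n ≥ 2` vertices and `w` a minimal-length
word-representant of `T` (of length `2n − 2`). Let `x` and `y` be the two vertices occurring
exactly once in `w`, with `x` occurring before `y` (so the restriction of `w` to `{x, y}`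
is exactly `[x, y]`). Then `xy` is an edge of `T` and `w = u ++ v` where every letter of `u`
lies in the component of `x` and every letter of `v` lies in the component of `y` of the
graph obtained from `T` by deleting the edge `xy`. -/
theorem minimal_rep_subtree_order [Fintype V] [DecidableEq V]
    (T : SimpleGraph V) (hT : T.IsTree) (n : ℕ) (hn : Fintype.card V = n) (h2 : 2 ≤ n)
    (w : List V) (hw : Represents T w) (hlen : w.length = 2 * n - 2)
    (x y : V) (hxy : x ≠ y) (hx : w.count x = 1) (hy : w.count y = 1)
    (horder : restrictWord w x y = [x, y]) :
    T.Adj x y ∧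
    ∃ u v : List V, w = u ++ v ∧
      (∀ z ∈ u, (T.deleteEdges {s(x, y)}).Reachable x z) ∧
      (∀ z ∈ v, (T.deleteEdges {s(x, y)}).Reachable y z) :=
  minimal_rep_subtree_order_general T hT n hn w hw hlen x y hxy hx hy horder
end

section
/- Let k and l be positive integers, and let t = a^k b^l a (the word consisting of k copies of a letter a, followed by l copies of a distinct letter b, followed by one more copy of a). Then every finite simple graph is t-representable. -/
variable {V : Type*}

/-- A pattern on two distinct letters `a`, `b` is encoded as a `List Bool`,
where `false` stands for `a` and `true` stands for `b`.  `patternWord t c d` is the word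
obtained from the pattern `t` by the substitution `a ↦ c`, `b ↦ d`. -/
def patternWord {α : Type*} (t : List Bool) (c d : α) : List α :=
  t.map fun b => if b then d else c

/-- `u` contains the pattern `t`: some contiguous factor of `u` is isomorphic to `t`,
i.e. is the image of `t` under an injective substitution of the two letters. -/
def ContainsPattern {α : Type*} (t : List Bool) (u : List α) : Prop :=
  ∃ c d : α, c ≠ d ∧ patternWord t c d <:+: u

/-- `w` `t`-represents the simple graph `G`: every vertex occurs in `w`, and two distinct
vertices `x`, `y` are adjacent iff the restriction of `w` to `{x, y}` avoids the pattern `t`. -/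
def TRepresents [DecidableEq V] (t : List Bool) (G : SimpleGraph V) (w : List V) : Prop :=
  (∀ v : V, v ∈ w) ∧
  ∀ x y : V, x ≠ y → (G.Adj x y ↔ ¬ ContainsPattern t (restrictWord w x y))

/-- `G` is `t`-representable if some word `t`-represents it. -/
def TRepresentable [DecidableEq V] (t : List Bool) (G : SimpleGraph V) : Prop :=
  ∃ w : List V, TRepresents t G w

/-!
Take the word listing every vertex `l + 1` times, followed by the gadget `xᵏ yˡ xˡ⁺¹ yˡ⁺¹` for
every ordered non-adjacent pair `x ≠ y`. The gadget begins with the pattern, so non-adjacent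
pairs contain it. For an adjacent pair `{x, y}` no gadget survives the restriction intact: each
gadget meeting `{x, y}` restricts to a power of a single letter of exponent greater than `l`, so
the whole restriction consists of runs longer than `l`. Since `k ≥ 1`, an occurrence of
`cᵏ dˡ c` would contain `c dˡ c`, a run of `d` of length exactly `l`.
-/

open List

/-- Neighbouring blocks may share their letter, so these are exactly the words all of whose
maximal runs are longer than `l`. -/
inductive RunsLongerThan {α : Type*} (l : ℕ) : List α → Prop
  | nil : RunsLongerThan l []
  | replicate_append {n : ℕ} (z : α) {u : List α} :
      l < n → RunsLongerThan l u → RunsLongerThan l (replicate n z ++ u)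

namespace RunsLongerThan

variable {α β : Type*} {l n : ℕ} {u v e : List α} {c d : α}

theorem replicate (hn : l < n) (z : α) : RunsLongerThan l (List.replicate n z) := by
  simpa using replicate_append z hn nil

theorem append (hu : RunsLongerThan l u) (hv : RunsLongerThan l v) :
    RunsLongerThan l (u ++ v) := by
  induction hu with
  | nil => simpa
  | replicate_append z hn _ ih => simpa using replicate_append z hn ih

theorem flatMap {L : List β} {f : β → List α} (h : ∀ b ∈ L, RunsLongerThan l (f b)) :
    RunsLongerThan l (L.flatMap f) := by
  induction L with
  | nil => exact nil
  | cons b L ih =>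
    exact (h b mem_cons_self).append (ih fun b' hb' => h b' (mem_cons_of_mem b hb'))

theorem replicate_prefix_of_cons (hu : RunsLongerThan l (d :: e)) :
    List.replicate l d <+: e := by
  generalize hw : d :: e = w at hu
  cases hu with
  | nil => exact absurd hw (cons_ne_nil d e)
  | @replicate_append n z u hn _ =>
    obtain ⟨n, rfl⟩ : ∃ n', n = n' + 1 := ⟨n - 1, by omega⟩
    obtain ⟨rfl, rfl⟩ := cons_eq_cons.mp hw
    exact (prefix_replicate_iff.mpr ⟨by simp; omega, by simp⟩).trans (prefix_append _ _)

theorem replicate_prefix_of_suffix (hu : RunsLongerThan l u) (hcd : c ≠ d)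
    (h : c :: d :: e <:+ u) : List.replicate l d <+: e := by
  induction hu with
  | nil => simp at h
  | @replicate_append n z u hn hu ih =>
    obtain ⟨s, hs⟩ := h
    rcases append_eq_append_iff.mp hs with ⟨a, hza, ha⟩ | ⟨b, -, hu'⟩
    · have ha' : a = List.replicate a.length z :=
        (suffix_replicate_iff.mp ⟨s, hza.symm⟩).2
      match a, ha' with
      | [], _ => exact ih ⟨[], ha⟩
      | [_], ha' =>
        obtain ⟨-, rfl⟩ := cons_eq_cons.mp ha
        exact replicate_prefix_of_cons hu
      | _ :: _ :: _, ha' =>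
        simp only [cons_append, length_cons, replicate_succ, cons.injEq] at ha ha'
        exact absurd (by rw [ha.1, ha.2.1, ha'.1, ha'.2.1]) hcd
    · exact ih ⟨b, hu'.symm⟩

theorem not_infix (hu : RunsLongerThan l u) (hl : 0 < l) (hcd : c ≠ d) :
    ¬ c :: List.replicate l d ++ [c] <:+: u := by
  rintro ⟨s, e, hse⟩
  obtain ⟨l, rfl⟩ : ∃ l', l = l' + 1 := ⟨l - 1, by omega⟩
  have h := hu.replicate_prefix_of_suffix hcd ⟨s, by simpa [replicate_succ] using hse⟩
  have hdc : d = c := by simpa [replicate_succ'] using h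
  exact hcd hdc.symm

end RunsLongerThan

section Akbla

variable {α : Type*} {k l : ℕ}

def akbla (k l : ℕ) : List Bool :=
  List.replicate k false ++ List.replicate l true ++ [false]

theorem patternWord_akbla (k l : ℕ) (c d : α) :
    patternWord (akbla k l) c d = List.replicate k c ++ List.replicate l d ++ [c] := by
  simp [akbla, patternWord]

theorem RunsLongerThan.not_containsPattern_akbla {u : List α} (hu : RunsLongerThan l u)
    (hk : 0 < k) (hl : 0 < l) : ¬ ContainsPattern (akbla k l) u := by
  rintro ⟨c, d, hcd, h⟩
  obtain ⟨k, rfl⟩ : ∃ k', k = k' + 1 := ⟨k - 1, by omega⟩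
  refine hu.not_infix hl hcd (IsInfix.trans ?_ h)
  exact IsSuffix.isInfix ⟨List.replicate k c, by simp [patternWord_akbla, replicate_succ']⟩

def nonEdgeGadget (k l : ℕ) (x y : V) : List V :=
  List.replicate k x ++ List.replicate l y ++ List.replicate (l + 1) x ++
    List.replicate (l + 1) y

theorem patternWord_akbla_prefix_nonEdgeGadget (k l : ℕ) (x y : V) :
    patternWord (akbla k l) x y <+: nonEdgeGadget k l x y :=
  ⟨List.replicate l x ++ List.replicate (l + 1) y, by
    simp [patternWord_akbla, nonEdgeGadget, replicate_succ]⟩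

theorem runsLongerThan_filter_nonEdgeGadget {p : V → Bool} {x y : V} (hxy : ¬ (p x ∧ p y)) :
    RunsLongerThan l ((nonEdgeGadget k l x y).filter p) := by
  cases hx : p x <;> cases hy : p y <;> simp [nonEdgeGadget, hx, hy] at hxy ⊢
  all_goals first | exact .nil | exact .replicate (by omega) _

open Classical in
noncomputable def akblaWord [Fintype V] (G : SimpleGraph V) (k l : ℕ) : List V :=
  (Finset.univ.toList.flatMap fun v => List.replicate (l + 1) v) ++
    (Finset.univ.filter fun p : V × V => Gᶜ.Adj p.1 p.2).toList.flatMap fun p =>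
      nonEdgeGadget k l p.1 p.2

variable [Fintype V] (G : SimpleGraph V)

theorem mem_akblaWord (v : V) : v ∈ akblaWord G k l :=
  mem_append_left _ (mem_flatMap.mpr ⟨v, by simp, mem_replicate.mpr ⟨by omega, rfl⟩⟩)

theorem nonEdgeGadget_infix_akblaWord {x y : V} (h : Gᶜ.Adj x y) :
    nonEdgeGadget k l x y <:+: akblaWord G k l := by
  classical
  have hxy : (x, y) ∈ (Finset.univ.filter fun p : V × V => Gᶜ.Adj p.1 p.2).toList := by
    simpa using h
  exact (infix_of_mem_flatten
    (mem_map_of_mem (f := fun p => nonEdgeGadget k l p.1 p.2) hxy)).trans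
    (suffix_append _ _).isInfix

variable [DecidableEq V]

theorem runsLongerThan_restrictWord_akblaWord {x y : V} (h : G.Adj x y) :
    RunsLongerThan l (restrictWord (akblaWord G k l) x y) := by
  rw [restrictWord, akblaWord, filter_append, filter_flatMap, filter_flatMap]
  refine .append (.flatMap fun v _ => ?_) (.flatMap fun p hp => ?_)
  · rw [filter_replicate]
    split
    exacts [.replicate (by omega) _, .nil]
  · obtain ⟨hne, hnadj⟩ := (G.compl_adj _ _).mp (by simpa using hp)
    refine runsLongerThan_filter_nonEdgeGadget ?_
    simp only [decide_eq_true_eq]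
    rintro ⟨h1 | h1, h2 | h2⟩ <;> simp_all [G.adj_comm]

theorem containsPattern_restrictWord_akblaWord {x y : V} (h : Gᶜ.Adj x y) :
    ContainsPattern (akbla k l) (restrictWord (akblaWord G k l) x y) := by
  refine ⟨x, y, h.ne, ?_⟩
  have := (nonEdgeGadget_infix_akblaWord (k := k) (l := l) G h).filter
    fun z => decide (z = x ∨ z = y)
  rw [filter_eq_self.mpr fun z hz => by simp [nonEdgeGadget] at hz ⊢; tauto] at this
  exact (patternWord_akbla_prefix_nonEdgeGadget k l x y).isInfix.trans this

end Akbla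

/-- For positive integers `k` and `l` and the pattern `t = aᵏ bˡ a`,
every finite simple graph is `t`-representable. -/
theorem all_graphs_akbla_representable (k l : ℕ) (hk : 1 ≤ k) (hl : 1 ≤ l)
    {V : Type*} [Fintype V] [DecidableEq V] (G : SimpleGraph V) :
    TRepresentable (List.replicate k false ++ List.replicate l true ++ [false]) G := by
  refine ⟨akblaWord G k l, mem_akblaWord G, fun x y hxy => ?_⟩
  by_cases hadj : G.Adj x y
  · exact iff_of_true hadj
      ((runsLongerThan_restrictWord_akblaWord G hadj).not_containsPattern_akbla hk hl)
  · exact iff_of_false hadj <| not_not_intro <|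
      containsPattern_restrictWord_akblaWord G ((G.compl_adj x y).mpr ⟨hxy, hadj⟩)
end

section
/- Let k, l ≥ 2 be integers, and let t = a^k b^l (the word consisting of k copies of a letter a followed by l copies of a distinct letter b). Then every finite simple graph is t-representable. -/
variable {V : Type*}

/-!
Fix an enumeration `P` of the vertices and put `S = P P`. The word `S B₁ S B₂ ⋯ Bₘ S`, with
one block `Bᵢ = uᵏ vˡ` for each ordered non-adjacent pair `(u, v)`, represents `G`. For a
non-edge `xy` the block `xᵏ yˡ` survives in the restriction to `{x, y}`. For an edge `xy` no
block contains both `x` and `y`, so the restriction is `q r₁ q r₂ ⋯ rₘ q` with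
`q ∈ {xyxy, yxyx}` and constant runs `rᵢ`. Since `|q| ≥ 3`, every factor of length four lies
inside some `q rᵢ q`, where the alternation of `q` rules out a factor `ccdd` with `c ≠ d`; but
any occurrence of `aᵏ bˡ` with `k, l ≥ 2` contains such a factor.
-/

namespace List

variable {α β : Type*}

def joinFramed (s : List α) (L : List (List α)) : List α :=
  s ++ (L.map (· ++ s)).flatten

theorem infix_joinFramed_of_mem {s r : List α} {L : List (List α)} (h : r ∈ L) :
    r <:+: s.joinFramed L := by
  have hmem : r ++ s ∈ L.map (· ++ s) := mem_map_of_mem h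
  exact ((prefix_append r s).isInfix.trans (infix_of_mem_flatten hmem)).trans
    (suffix_append s _).isInfix

theorem filter_joinFramed (p : α → Bool) (s : List α) (L : List (List α)) :
    (s.joinFramed L).filter p = (s.filter p).joinFramed (L.map (filter p)) := by
  simp [joinFramed, filter_flatten, Function.comp_def]

theorem map_joinFramed (f : α → β) (s : List α) (L : List (List α)) :
    (s.joinFramed L).map f = (s.map f).joinFramed (L.map (map f)) := by
  simp [joinFramed, map_flatten, Function.comp_def]

theorem infix_of_append_eq_append_of_length_le {s v t A R : List α}
    (h : s ++ v ++ t = A ++ R) (hA : A.length ≤ s.length) : v <:+: R := by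
  rw [append_assoc, append_eq_append_iff] at h
  obtain ⟨a, rfl, hR⟩ | ⟨b, -, rfl⟩ := h
  · obtain rfl : a = [] := by simpa using hA
    exact (hR ▸ prefix_append v t).isInfix
  · exact infix_append' b v t

theorem IsInfix.infix_append_or_infix_append {v A m B : List α} (h : v <:+: A ++ m ++ B)
    (hv : v.length ≤ m.length + 1) : v <:+: A ++ m ∨ v <:+: m ++ B := by
  obtain ⟨s, t, hst⟩ := h
  by_cases hs : A.length ≤ s.length
  · exact .inr (infix_of_append_eq_append_of_length_le (by rw [hst, append_assoc]) hs)
  · have hlen := congrArg length hst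
    simp only [length_append] at hlen
    refine .inl (reverse_infix.mp (infix_of_append_eq_append_of_length_le (s := t.reverse)
      (t := s.reverse) (A := B.reverse) ?_ (by simp; omega)))
    simpa using congrArg List.reverse hst

end List

open List

theorem not_infix_alt_replicate_alt {c d : Bool} (hcd : c ≠ d) (b : Bool) (e : ℕ) :
    ¬ [c, c, d, d] <:+:
      [false, true, false, true] ++ replicate e b ++ [false, true, false, true] := by
  have small : ∀ c d b : Bool, c ≠ d → ∀ e ≤ 3, ¬ [c, c, d, d] <:+:
      [false, true, false, true] ++ replicate e b ++ [false, true, false, true] := by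
    decide
  obtain he | ⟨n, rfl⟩ : e ≤ 3 ∨ ∃ n, e = 3 + n := by
    rcases le_or_gt e 3 with he | he
    · exact .inl he
    · exact .inr ⟨e - 3, by omega⟩
  · exact small c d b hcd e he
  have hconst : ∀ n, ¬ [c, c, d, d] <:+: replicate n b := fun n h =>
    hcd (by simp_all [infix_replicate_iff])
  -- A factor of length four lies in `q bbb`, in `bbb q` or inside the run `bⁿ⁺³`.
  intro h
  rw [replicate_add, ← append_assoc, append_assoc] at h
  rcases h.infix_append_or_infix_append (by simp) with h | h
  · exact small c d b hcd 3 le_rfl (h.trans (prefix_append _ _).isInfix)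
  rw [← append_assoc, ← replicate_add, add_comm, replicate_add] at h
  rcases h.infix_append_or_infix_append (by simp) with h | h
  · exact hconst _ (by rwa [← replicate_add] at h)
  · refine small c d b hcd 3 le_rfl (h.trans ?_)
    rw [append_assoc]
    exact (suffix_append _ _).isInfix

theorem not_infix_joinFramed_alt {c d : Bool} (hcd : c ≠ d) {L : List (List Bool)}
    (hL : ∀ r ∈ L, ∃ e b, r = replicate e b) :
    ¬ [c, c, d, d] <:+: [false, true, false, true].joinFramed L := by
  induction L with
  | nil => revert c d; decide
  | cons r L ih =>
    obtain ⟨e, b, rfl⟩ := hL r mem_cons_self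
    intro h
    have : [false, true, false, true].joinFramed (replicate e b :: L) =
        [false, true, false, true] ++ replicate e b ++ [false, true, false, true] ++
          (L.map (· ++ [false, true, false, true])).flatten := by
      simp [joinFramed]
    rw [this] at h
    rcases h.infix_append_or_infix_append (by simp) with h | h
    · exact not_infix_alt_replicate_alt hcd b e h
    · exact ih (fun r hr => hL r (mem_cons_of_mem _ hr)) h

theorem patternWord_replicate_append_replicate {α : Type*} (k l : ℕ) (c d : α) :
    patternWord (replicate k false ++ replicate l true) c d = replicate k c ++ replicate l d := by
  simp [patternWord]

theorem exists_infix_of_containsPattern_replicate_append_replicate {α : Type*} {k l : ℕ}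
    (hk : 2 ≤ k) (hl : 2 ≤ l) {u : List α}
    (h : ContainsPattern (replicate k false ++ replicate l true) u) :
    ∃ c d, c ≠ d ∧ [c, c, d, d] <:+: u := by
  obtain ⟨c, d, hcd, hu⟩ := h
  refine ⟨c, d, hcd, IsInfix.trans ⟨replicate (k - 2) c, replicate (l - 2) d, ?_⟩ hu⟩
  rw [patternWord_replicate_append_replicate]
  obtain ⟨k, rfl⟩ : ∃ k', k = k' + 2 := ⟨k - 2, by omega⟩
  obtain ⟨l, rfl⟩ : ∃ l', l = 2 + l' := ⟨l - 2, by omega⟩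
  simp [replicate_add]

def akblWord (P : List V) (E : List (V × V)) (k l : ℕ) : List V :=
  (P ++ P).joinFramed (E.map fun p => replicate k p.1 ++ replicate l p.2)

section Representation

variable [DecidableEq V]

theorem restrictWord_comm (w : List V) (x y : V) : restrictWord w x y = restrictWord w y x := by
  simp [restrictWord, or_comm]

theorem List.Nodup.restrictWord_eq_pair_or {P : List V} (hP : P.Nodup) {x y : V} (hx : x ∈ P)
    (hy : y ∈ P) (hxy : x ≠ y) :
    restrictWord P x y = [x, y] ∨ restrictWord P x y = [y, x] := by
  rw [← perm_pair, restrictWord, perm_ext_iff_of_nodup (hP.filter _) (by simp [hxy])]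
  intro z
  simp only [mem_filter, decide_eq_true_eq, mem_cons, not_mem_nil, or_false]
  grind

theorem exists_restrictWord_replicate_append_replicate_eq_replicate {G : SimpleGraph V}
    {x y u v : V} (hxy : G.Adj x y) (huv : Gᶜ.Adj u v) (k l : ℕ) :
    ∃ e c, restrictWord (replicate k u ++ replicate l v) x y = replicate e c := by
  have hnot : ¬ ((u = x ∨ u = y) ∧ (v = x ∨ v = y)) := by
    rw [SimpleGraph.compl_adj] at huv
    rintro ⟨hu | hu, hv | hv⟩ <;> subst hu hv <;> simp_all [G.adj_comm]
  simp only [restrictWord, filter_append, filter_replicate, decide_eq_true_eq]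
  by_cases hu : u = x ∨ u = y
  · exact ⟨k, u, by rw [if_pos hu, if_neg fun hv => hnot ⟨hu, hv⟩, append_nil]⟩
  · by_cases hv : v = x ∨ v = y
    · exact ⟨l, v, by simp [hu, hv]⟩
    · exact ⟨0, u, by simp [hu, hv]⟩

theorem restrictWord_akblWord (P : List V) (E : List (V × V)) (k l : ℕ) (x y : V) :
    restrictWord (akblWord P E k l) x y = (restrictWord P x y ++ restrictWord P x y).joinFramed
      (E.map fun p => restrictWord (replicate k p.1 ++ replicate l p.2) x y) := by
  rw [restrictWord, akblWord, filter_joinFramed, filter_append, map_map]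
  rfl

theorem not_containsPattern_restrictWord_akblWord {G : SimpleGraph V} {k l : ℕ} (hk : 2 ≤ k)
    (hl : 2 ≤ l) {P : List V} {E : List (V × V)} (hE : ∀ p ∈ E, Gᶜ.Adj p.1 p.2) {x y : V}
    (hxy : G.Adj x y) (hP : restrictWord P x y = [x, y]) :
    ¬ ContainsPattern (replicate k false ++ replicate l true)
      (restrictWord (akblWord P E k l) x y) := by
  intro h
  obtain ⟨c, d, hcd, hinf⟩ := exists_infix_of_containsPattern_replicate_append_replicate hk hl h
  have hmem : ∀ z ∈ restrictWord (akblWord P E k l) x y, z = x ∨ z = y := fun z hz => by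
    simpa [restrictWord] using (mem_filter.mp hz).2
  let g : V → Bool := fun z => decide (z = y)
  have hg : g c ≠ g d := by
    have := hmem c (hinf.subset (by simp))
    have := hmem d (hinf.subset (by simp))
    grind
  refine not_infix_joinFramed_alt hg
    (L := E.map fun p => (restrictWord (replicate k p.1 ++ replicate l p.2) x y).map g) ?_ ?_
  · simp only [mem_map]
    rintro _ ⟨p, hp, rfl⟩
    obtain ⟨e, c, he⟩ :=
      exists_restrictWord_replicate_append_replicate_eq_replicate hxy (hE p hp) k l
    exact ⟨e, g c, by rw [he, map_replicate]⟩
  · have hmap := hinf.map g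
    rw [restrictWord_akblWord, hP, map_joinFramed, map_map] at hmap
    simpa [g, hxy.ne, Function.comp_def] using hmap

theorem containsPattern_restrictWord_akblWord {P : List V} {E : List (V × V)} {x y : V}
    (hxy : x ≠ y) (hE : (x, y) ∈ E) (k l : ℕ) :
    ContainsPattern (replicate k false ++ replicate l true)
      (restrictWord (akblWord P E k l) x y) := by
  refine ⟨x, y, hxy, ?_⟩
  have hblock : replicate k x ++ replicate l y ∈
      E.map fun p => replicate k p.1 ++ replicate l p.2 := mem_map_of_mem hE
  have := (infix_joinFramed_of_mem (s := P ++ P) hblock).filter fun z => decide (z = x ∨ z = y)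
  rw [patternWord_replicate_append_replicate, restrictWord, akblWord]
  rwa [filter_eq_self.mpr fun a ha => by
    rcases mem_append.mp ha with h | h <;> simp [eq_of_mem_replicate h]] at this

theorem tRepresents_akblWord {G : SimpleGraph V} {k l : ℕ} (hk : 2 ≤ k) (hl : 2 ≤ l)
    {P : List V} (hP : P.Nodup) (hPV : ∀ v, v ∈ P) {E : List (V × V)}
    (hE : ∀ p, p ∈ E ↔ Gᶜ.Adj p.1 p.2) :
    TRepresents (replicate k false ++ replicate l true) G (akblWord P E k l) := by
  refine ⟨fun v => by simp [akblWord, joinFramed, hPV],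
    fun x y hxy => ⟨fun hadj => ?_, fun h => ?_⟩⟩
  · have hE' : ∀ p ∈ E, Gᶜ.Adj p.1 p.2 := fun p => (hE p).1
    rcases hP.restrictWord_eq_pair_or (hPV x) (hPV y) hxy with hPxy | hPxy
    · exact not_containsPattern_restrictWord_akblWord hk hl hE' hadj hPxy
    · rw [restrictWord_comm] at hPxy ⊢
      exact not_containsPattern_restrictWord_akblWord hk hl hE' hadj.symm hPxy
  · by_contra hadj
    exact h (containsPattern_restrictWord_akblWord hxy ((hE _).2 (by simp [hxy, hadj])) k l)

end Representation

/-- For integers `k, l ≥ 2` and the pattern `t = aᵏ bˡ`,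
every finite simple graph is `t`-representable. -/
theorem all_graphs_akbl_representable (k l : ℕ) (hk : 2 ≤ k) (hl : 2 ≤ l)
    {V : Type*} [Fintype V] [DecidableEq V] (G : SimpleGraph V) :
    TRepresentable (List.replicate k false ++ List.replicate l true) G := by
  classical
  exact ⟨_, tRepresents_akblWord hk hl (Finset.nodup_toList Finset.univ) (by simp)
    (E := (Finset.univ.filter fun p : V × V => Gᶜ.Adj p.1 p.2).toList) (by simp)⟩
end
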